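/- For η > 0 and ψ ∈ ℝ, 1/(cosh η − cos ψ)² = (1/sinh³η)·Σ_{n=0}^∞ ε_n·cos(nψ)·e^{−nη}·(cosh η + n·sinh η), where ε_n = 2 − δ_{n,0}, and the series converges absolutely. -/

import Mathlib

noncomputable def neumann (n : ℕ) : ℝ := if n = 0 then 1 else 2

/-!
Put `z = exp (-η + iψ)`, so `‖z‖ = e^{-η} < 1`. The `n`-th term of the series is the real part of
`ε_n (cosh η + n sinh η) zⁿ`, and the geometric series and its derivative sum these to
`cosh η · (1 + z)/(1 - z) + sinh η · 2z/(1 - z)²`. Since `|1 - z|² = 2e^{-η}(cosh η - cos ψ)`, the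
real parts are `sinh η/(cosh η - cos ψ)` (Poisson kernel) and `(cosh η cos ψ - 1)/(cosh η - cos ψ)²`,
which combine to `sinh³ η/(cosh η - cos ψ)²` by `cosh² - sinh² = 1`. Absolute convergence is free:
a summable series in `ℂ` is absolutely summable.
-/

section PowerSeries

variable {𝕜 : Type*} [RCLike 𝕜] {z : 𝕜}

lemma neumann_mul_natCast (n : ℕ) : neumann n * n = 2 * n := by
  rcases eq_or_ne n 0 with rfl | hn <;> simp [neumann, *]

lemma hasSum_neumann_mul_geometric (hz : ‖z‖ < 1) :
    HasSum (fun n : ℕ ↦ (neumann n : 𝕜) * z ^ n) ((1 + z) / (1 - z)) := by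
  have hz1 : 1 - z ≠ 0 := sub_ne_zero.mpr (ne_of_apply_ne norm (by simpa using hz.ne'))
  have h := ((hasSum_geometric_of_norm_lt_one hz).mul_left 2).sub (hasSum_ite_eq 0 (1 : 𝕜))
  rw [show (1 + z) / (1 - z) = 2 * (1 - z)⁻¹ - 1 by field_simp; ring]
  refine h.congr_fun fun n ↦ ?_
  rcases eq_or_ne n 0 with rfl | hn
  · norm_num [neumann]
  · simp [neumann, RCLike.ofReal_ofNat, hn]

lemma hasSum_neumann_mul_natCast_mul_geometric (hz : ‖z‖ < 1) :
    HasSum (fun n : ℕ ↦ (neumann n : 𝕜) * n * z ^ n) (2 * z / (1 - z) ^ 2) := by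
  rw [mul_div_assoc]
  refine ((hasSum_coe_mul_geometric_of_norm_lt_one hz).mul_left 2).congr_fun fun n ↦ ?_
  rw [← RCLike.ofReal_natCast, ← RCLike.ofReal_mul, neumann_mul_natCast]
  push_cast
  ring

lemma hasSum_neumann_mul_affine_mul_geometric (a b : 𝕜) (hz : ‖z‖ < 1) :
    HasSum (fun n : ℕ ↦ (neumann n : 𝕜) * (a + n * b) * z ^ n)
      (a * ((1 + z) / (1 - z)) + b * (2 * z / (1 - z) ^ 2)) :=
  ((hasSum_neumann_mul_geometric hz).mul_left a).add
    ((hasSum_neumann_mul_natCast_mul_geometric hz).mul_left b) |>.congr_fun fun n ↦ by ring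

end PowerSeries

namespace Complex

lemma re_one_add_div_one_sub (z : ℂ) :
    ((1 + z) / (1 - z)).re = (1 - normSq z) / normSq (1 - z) := by
  simp only [div_re, normSq_apply, add_re, add_im, sub_re, sub_im, one_re, one_im]
  ring

lemma re_two_mul_div_one_sub_sq (z : ℂ) :
    (2 * z / (1 - z) ^ 2).re =
      2 * (z.re * (1 + normSq z) - 2 * normSq z) / normSq (1 - z) ^ 2 := by
  simp only [div_re, normSq_apply, pow_two, mul_re, mul_im, sub_re, sub_im, one_re, one_im,
    re_ofNat, im_ofNat]
  ring

end Complex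

section PoissonKernel

open Real
open Complex (I normSq)

variable (η ψ : ℝ)

lemma one_add_exp_neg_sq : 1 + exp (-η) ^ 2 = 2 * exp (-η) * cosh η := by
  rw [cosh_eq, exp_neg]
  field_simp

lemma one_sub_exp_neg_sq : 1 - exp (-η) ^ 2 = 2 * exp (-η) * sinh η := by
  rw [sinh_eq, exp_neg]
  field_simp

lemma normSq_exp_neg_add_mul_I : normSq (Complex.exp (-η + ψ * I)) = exp (-η) ^ 2 := by
  rw [Complex.normSq_eq_norm_sq, Complex.norm_exp]
  simp

lemma re_exp_neg_add_mul_I : (Complex.exp (-η + ψ * I)).re = exp (-η) * cos ψ := by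
  simp [Complex.exp_re]

lemma normSq_one_sub_exp_neg_add_mul_I :
    normSq (1 - Complex.exp (-η + ψ * I)) = 2 * exp (-η) * (cosh η - cos ψ) := by
  rw [Complex.normSq_sub, map_one, one_mul, Complex.conj_re, re_exp_neg_add_mul_I,
    normSq_exp_neg_add_mul_I]
  linear_combination one_add_exp_neg_sq η

lemma re_one_add_div_one_sub_exp_neg_add_mul_I :
    ((1 + Complex.exp (-η + ψ * I)) / (1 - Complex.exp (-η + ψ * I))).re
      = sinh η / (cosh η - cos ψ) := by
  rw [Complex.re_one_add_div_one_sub, normSq_one_sub_exp_neg_add_mul_I, normSq_exp_neg_add_mul_I,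
    one_sub_exp_neg_sq, mul_div_mul_left _ _ (by positivity)]

lemma re_two_mul_exp_neg_add_mul_I_div_one_sub_sq :
    (2 * Complex.exp (-η + ψ * I) / (1 - Complex.exp (-η + ψ * I)) ^ 2).re
      = (cosh η * cos ψ - 1) / (cosh η - cos ψ) ^ 2 := by
  rw [Complex.re_two_mul_div_one_sub_sq, normSq_one_sub_exp_neg_add_mul_I,
    normSq_exp_neg_add_mul_I, one_add_exp_neg_sq, re_exp_neg_add_mul_I]
  have : exp (-η) ≠ 0 := by positivity
  field_simp

lemma re_cosh_mul_add_sinh_mul (hD : cos ψ ≠ cosh η) :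
    ((cosh η : ℂ) * ((1 + Complex.exp (-η + ψ * I)) / (1 - Complex.exp (-η + ψ * I)))
      + (sinh η : ℂ) * (2 * Complex.exp (-η + ψ * I) / (1 - Complex.exp (-η + ψ * I)) ^ 2)).re
      = sinh η ^ 3 / (cosh η - cos ψ) ^ 2 := by
  rw [Complex.add_re, Complex.re_ofReal_mul, Complex.re_ofReal_mul,
    re_one_add_div_one_sub_exp_neg_add_mul_I, re_two_mul_exp_neg_add_mul_I_div_one_sub_sq]
  have : cosh η - cos ψ ≠ 0 := sub_ne_zero.mpr hD.symm
  field_simp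
  linear_combination sinh η * cosh_sq η

lemma re_neumann_term (n : ℕ) :
    ((neumann n : ℂ) * ((cosh η : ℂ) + n * (sinh η : ℂ)) * Complex.exp (-η + ψ * I) ^ n).re
      = neumann n * cos (n * ψ) * exp (-(n : ℝ) * η) * (cosh η + n * sinh η) := by
  rw [← Complex.exp_nat_mul, ← Complex.ofReal_natCast, ← Complex.ofReal_mul, ← Complex.ofReal_add,
    ← Complex.ofReal_mul, Complex.re_ofReal_mul, Complex.exp_re]
  simp only [Complex.mul_re, Complex.mul_im, Complex.add_re, Complex.add_im, Complex.neg_re,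
    Complex.neg_im, Complex.ofReal_re, Complex.ofReal_im, Complex.I_re, Complex.I_im]
  ring_nf

end PoissonKernel

theorem inv_sq_cosh_sub_cos_fourier (η ψ : ℝ) (hη : 0 < η) :
    (Summable fun n : ℕ =>
      |neumann n * Real.cos (n * ψ) * Real.exp (-(n : ℝ) * η) *
        (Real.cosh η + n * Real.sinh η)|) ∧
    1 / (Real.cosh η - Real.cos ψ) ^ 2 =
      (1 / Real.sinh η ^ 3) *
        ∑' n : ℕ, neumann n * Real.cos (n * ψ) * Real.exp (-(n : ℝ) * η) *
          (Real.cosh η + n * Real.sinh η) := by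
  have hz : ‖Complex.exp (-η + ψ * Complex.I)‖ < 1 := by simpa [Complex.norm_exp] using hη
  have hD : Real.cos ψ ≠ Real.cosh η :=
    ((Real.cos_le_one ψ).trans_lt (Real.one_lt_cosh.mpr hη.ne')).ne
  have hsum := hasSum_neumann_mul_affine_mul_geometric (Real.cosh η : ℂ) (Real.sinh η) hz
  have hre := Complex.hasSum_re hsum
  simp only [RCLike.ofReal_eq_complex_ofReal, re_neumann_term, re_cosh_mul_add_sinh_mul η ψ hD]
    at hre
  refine ⟨.of_nonneg_of_le (fun n ↦ abs_nonneg _) (fun n ↦ ?_)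
    (summable_norm_iff.mpr hsum.summable), ?_⟩
  · rw [← re_neumann_term]
    exact Complex.abs_re_le_norm _
  · rw [hre.tsum_eq]
    have : Real.sinh η ≠ 0 := (Real.sinh_pos_iff.mpr hη).ne'
    field_simp
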